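/- Soundness of LLM with respect to linear logic: if an inversion sequent ⊢ Θ : Γ is derivable in LLM, then the one-sided dyadic sequent ⊢ |Θ| : |Γ| is provable in the dyadic sequent calculus for classical linear logic, where |·| erases the shifts ⇑ and ⇓ and maps all other connectives homomorphically; likewise, if a focused sequent ⊨ Θ : Ψ is derivable in LLM, then ⊢ |Θ| : |Ψ|° is provable in the dyadic calculus, where |Ψ|° erases each focus [P] to the formula |P| and erases shifts in the remaining formulas. -/

import Mathlib

mutual
inductive PForm (α : Type) : Type
  | atom  : α → PForm α
  | one   : PForm α
  | tens  : PForm α → PForm α → PForm α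
  | zero  : PForm α
  | plus  : PForm α → PForm α → PForm α
  | bang  : NForm α → PForm α
  | up    : NForm α → PForm α

inductive NForm (α : Type) : Type
  | natom : α → NForm α
  | bot   : NForm α
  | parr  : NForm α → NForm α → NForm α
  | top   : NForm α
  | wth   : NForm α → NForm α → NForm α
  | quest : PForm α → NForm α
  | down  : PForm α → NForm α
end

mutual
def PForm.dual {α : Type} : PForm α → NForm α
  | .atom a   => .natom a
  | .one      => .bot
  | .tens P Q => .parr P.dual Q.dual
  | .zero     => .top
  | .plus P Q => .wth P.dual Q.dual
  | .bang N   => .quest N.dual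
  | .up N     => .down N.dual

def NForm.dual {α : Type} : NForm α → PForm α
  | .natom a  => .atom a
  | .bot      => .one
  | .parr N M => .tens N.dual M.dual
  | .top      => .zero
  | .wth N M  => .plus N.dual M.dual
  | .quest P  => .bang P.dual
  | .down P   => .up P.dual
end

/-- Items of a focused context: negative formulas or foci `[P]`. -/
inductive FItem (α : Type) : Type
  | neg : NForm α → FItem α
  | foc : PForm α → FItem α

/-- Sequents of LLM: inversion sequents `⊢ Θ : Γ` and focusing sequents `⊨ Θ : Ψ`. -/
inductive LLMSeq (α : Type) : Type
  | inv : Multiset (PForm α) → Multiset (NForm α) → LLMSeq α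
  | foc : Multiset (PForm α) → Multiset (FItem α) → LLMSeq α

/-- A multiset of negatives seen as a focused context. -/
def negCtx {α : Type} (Γ : Multiset (NForm α)) : Multiset (FItem α) :=
  Γ.map FItem.neg

/-- A multiset of positives seen as a focused context entirely made of foci. -/
def focCtx {α : Type} (Θ : Multiset (PForm α)) : Multiset (FItem α) :=
  Θ.map FItem.foc

/-- The rules of the multifocused sequent calculus LLM. -/
inductive LLM {α : Type} : LLMSeq α → Prop
  | ax (Θ : Multiset (PForm α)) (a : α) :
      LLM (.foc Θ {FItem.neg (.natom a), FItem.foc (.atom a)})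
  | one (Θ : Multiset (PForm α)) :
      LLM (.foc Θ {FItem.foc .one})
  | tens {Θ : Multiset (PForm α)} {Ψ Ξ : Multiset (FItem α)} {P Q : PForm α} :
      LLM (.foc Θ (FItem.foc P ::ₘ Ψ)) → LLM (.foc Θ (FItem.foc Q ::ₘ Ξ)) →
      LLM (.foc Θ (FItem.foc (P.tens Q) ::ₘ (Ψ + Ξ)))
  | plusL {Θ : Multiset (PForm α)} {Ψ : Multiset (FItem α)} {P : PForm α} (Q : PForm α) :
      LLM (.foc Θ (FItem.foc P ::ₘ Ψ)) → LLM (.foc Θ (FItem.foc (P.plus Q) ::ₘ Ψ))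
  | plusR {Θ : Multiset (PForm α)} {Ψ : Multiset (FItem α)} {Q : PForm α} (P : PForm α) :
      LLM (.foc Θ (FItem.foc Q ::ₘ Ψ)) → LLM (.foc Θ (FItem.foc (P.plus Q) ::ₘ Ψ))
  | bang {Θ : Multiset (PForm α)} {N : NForm α} :
      LLM (.inv Θ {N}) → LLM (.foc Θ {FItem.foc (.bang N)})
  | up {Θ : Multiset (PForm α)} {Γ : Multiset (NForm α)} (Δ : Multiset (NForm α))
      (hΔ : Δ ≠ 0) :
      LLM (.inv Θ (Γ + Δ)) →
      LLM (.foc Θ (negCtx Γ + Δ.map (fun N => FItem.foc (.up N))))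
  | down {Θ : Multiset (PForm α)} {Γ : Multiset (NForm α)} (Θn Θ' : Multiset (PForm α))
      (hcopy : ∀ P ∈ Θn, P ∈ Θ) (hne : Θn ≠ 0 ∨ Θ' ≠ 0) :
      LLM (.foc Θ (focCtx Θn + negCtx Γ + focCtx Θ')) →
      LLM (.inv Θ (Γ + Θ'.map NForm.down))
  | bot {Θ : Multiset (PForm α)} {Γ : Multiset (NForm α)} :
      LLM (.inv Θ Γ) → LLM (.inv Θ (NForm.bot ::ₘ Γ))
  | parr {Θ : Multiset (PForm α)} {Γ : Multiset (NForm α)} {N M : NForm α} :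
      LLM (.inv Θ (N ::ₘ M ::ₘ Γ)) → LLM (.inv Θ (NForm.parr N M ::ₘ Γ))
  | top (Θ : Multiset (PForm α)) (Γ : Multiset (NForm α)) :
      LLM (.inv Θ (NForm.top ::ₘ Γ))
  | wth {Θ : Multiset (PForm α)} {Γ : Multiset (NForm α)} {N M : NForm α} :
      LLM (.inv Θ (N ::ₘ Γ)) → LLM (.inv Θ (M ::ₘ Γ)) →
      LLM (.inv Θ (NForm.wth N M ::ₘ Γ))
  | quest {Θ : Multiset (PForm α)} {Γ : Multiset (NForm α)} {P : PForm α} :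
      LLM (.inv (P ::ₘ Θ) Γ) → LLM (.inv Θ (NForm.quest P ::ₘ Γ))

/-- Formulas of (unpolarized) classical linear logic. -/
inductive LL (α : Type) : Type
  | atom  : α → LL α
  | natom : α → LL α
  | one   : LL α
  | bot   : LL α
  | tens  : LL α → LL α → LL α
  | parr  : LL α → LL α → LL α
  | zero  : LL α
  | top   : LL α
  | plus  : LL α → LL α → LL α
  | wth   : LL α → LL α → LL α
  | bang  : LL α → LL α
  | quest : LL α → LL α

/-- The dyadic sequent calculus for one-sided classical linear logic:
`DyadicLL Θ Γ` means `⊢ Θ : Γ` where `Θ` is the unbounded zone. -/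
inductive DyadicLL {α : Type} : Multiset (LL α) → Multiset (LL α) → Prop
  | ax (Θ : Multiset (LL α)) (a : α) : DyadicLL Θ {.natom a, .atom a}
  | one (Θ : Multiset (LL α)) : DyadicLL Θ {.one}
  | bot {Θ Γ} : DyadicLL Θ Γ → DyadicLL Θ (LL.bot ::ₘ Γ)
  | tens {Θ Γ Δ} {A B : LL α} :
      DyadicLL Θ (A ::ₘ Γ) → DyadicLL Θ (B ::ₘ Δ) → DyadicLL Θ (LL.tens A B ::ₘ (Γ + Δ))
  | parr {Θ Γ} {A B : LL α} :
      DyadicLL Θ (A ::ₘ B ::ₘ Γ) → DyadicLL Θ (LL.parr A B ::ₘ Γ)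
  | top (Θ Γ : Multiset (LL α)) : DyadicLL Θ (LL.top ::ₘ Γ)
  | plusL {Θ Γ} {A : LL α} (B : LL α) :
      DyadicLL Θ (A ::ₘ Γ) → DyadicLL Θ (LL.plus A B ::ₘ Γ)
  | plusR {Θ Γ} {B : LL α} (A : LL α) :
      DyadicLL Θ (B ::ₘ Γ) → DyadicLL Θ (LL.plus A B ::ₘ Γ)
  | wth {Θ Γ} {A B : LL α} :
      DyadicLL Θ (A ::ₘ Γ) → DyadicLL Θ (B ::ₘ Γ) → DyadicLL Θ (LL.wth A B ::ₘ Γ)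
  | quest {Θ Γ} {A : LL α} :
      DyadicLL (A ::ₘ Θ) Γ → DyadicLL Θ (LL.quest A ::ₘ Γ)
  | copy {Θ Γ} {A : LL α} (hA : A ∈ Θ) :
      DyadicLL Θ (A ::ₘ Γ) → DyadicLL Θ Γ
  | bang {Θ} {A : LL α} :
      DyadicLL Θ {A} → DyadicLL Θ {LL.bang A}

-- Erasure of shifts, from polarized formulas to linear logic formulas.
mutual
def PForm.erase {α : Type} : PForm α → LL α
  | .atom a   => .atom a
  | .one      => .one
  | .tens P Q => .tens P.erase Q.erase
  | .zero     => .zero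
  | .plus P Q => .plus P.erase Q.erase
  | .bang N   => .bang N.erase
  | .up N     => N.erase

def NForm.erase {α : Type} : NForm α → LL α
  | .natom a  => .natom a
  | .bot      => .bot
  | .parr N M => .parr N.erase M.erase
  | .top      => .top
  | .wth N M  => .wth N.erase M.erase
  | .quest P  => .quest P.erase
  | .down P   => P.erase
end

/-- Erasure of an item of a focused context: a focus `[P]` is erased to `|P|`. -/
def FItem.erase {α : Type} : FItem α → LL α
  | .neg N => N.erase
  | .foc P => P.erase

lemma dyadic_copy_many {α : Type} {Θ : Multiset (LL α)} (Δ : Multiset (LL α))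
    (h : ∀ A ∈ Δ, A ∈ Θ) : ∀ {Γ : Multiset (LL α)}, DyadicLL Θ (Δ + Γ) → DyadicLL Θ Γ := by
  induction Δ using Multiset.induction with
  | empty => intro Γ hd; simpa using hd
  | cons a Δ ih =>
    intro Γ hd
    refine ih (fun A hA => h A (Multiset.mem_cons_of_mem hA)) ?_
    exact DyadicLL.copy (h a (Multiset.mem_cons_self _ _)) (by simpa using hd)

def LLMSound {α : Type} : LLMSeq α → Prop
  | .inv Θ Γ => DyadicLL (Θ.map PForm.erase) (Γ.map NForm.erase)
  | .foc Θ Ψ => DyadicLL (Θ.map PForm.erase) (Ψ.map FItem.erase)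

lemma llm_sound_aux {α : Type} (s : LLMSeq α) (h : LLM s) : LLMSound s := by
  induction h with
  | ax Θ a =>
    simpa [LLMSound, FItem.erase, NForm.erase, PForm.erase] using
      DyadicLL.ax (Θ.map PForm.erase) a
  | one Θ =>
    simpa [LLMSound, FItem.erase, PForm.erase] using DyadicLL.one (Θ.map PForm.erase)
  | tens _ _ ih1 ih2 =>
    simp only [LLMSound, Multiset.map_cons, FItem.erase, Multiset.map_add] at *
    simpa [PForm.erase] using DyadicLL.tens ih1 ih2
  | plusL Q _ ih =>
    simp only [LLMSound, Multiset.map_cons, FItem.erase] at *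
    simpa [PForm.erase] using DyadicLL.plusL _ ih
  | plusR P _ ih =>
    simp only [LLMSound, Multiset.map_cons, FItem.erase] at *
    simpa [PForm.erase] using DyadicLL.plusR _ ih
  | bang _ ih =>
    simp only [LLMSound] at *
    simpa [PForm.erase, FItem.erase] using DyadicLL.bang (by simpa using ih)
  | up Δ hΔ _ ih =>
    simp only [LLMSound, negCtx, Multiset.map_add, Multiset.map_map] at *
    simpa [Function.comp_def, FItem.erase, PForm.erase] using ih
  | down Θn Θ' hcopy hne _ ih =>
    simp only [LLMSound, negCtx, focCtx, Multiset.map_add, Multiset.map_map] at *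
    refine dyadic_copy_many (Θn.map PForm.erase) ?_ ?_
    · intro A hA
      rcases Multiset.mem_map.mp hA with ⟨P, hP, rfl⟩
      exact Multiset.mem_map_of_mem _ (hcopy P hP)
    · simpa [Function.comp_def, FItem.erase, NForm.erase, add_assoc] using ih
  | bot _ ih =>
    simp only [LLMSound, Multiset.map_cons] at *
    simpa [NForm.erase] using DyadicLL.bot ih
  | parr _ ih =>
    simp only [LLMSound, Multiset.map_cons] at *
    simpa [NForm.erase] using DyadicLL.parr ih
  | top Θ Γ =>
    simpa [LLMSound, NForm.erase] using DyadicLL.top (Θ.map PForm.erase) (Γ.map NForm.erase)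
  | wth _ _ ih1 ih2 =>
    simp only [LLMSound, Multiset.map_cons] at *
    simpa [NForm.erase] using DyadicLL.wth ih1 ih2
  | quest _ ih =>
    simp only [LLMSound, Multiset.map_cons] at *
    simpa [NForm.erase] using DyadicLL.quest ih

/-- Soundness of LLM with respect to the dyadic sequent calculus for
classical linear logic. -/
theorem llm_soundness {α : Type} :
    (∀ (Θ : Multiset (PForm α)) (Γ : Multiset (NForm α)),
      LLM (.inv Θ Γ) → DyadicLL (Θ.map PForm.erase) (Γ.map NForm.erase)) ∧
    (∀ (Θ : Multiset (PForm α)) (Ψ : Multiset (FItem α)),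
      LLM (.foc Θ Ψ) → DyadicLL (Θ.map PForm.erase) (Ψ.map FItem.erase)) := by
  exact ⟨fun Θ Γ h => llm_sound_aux _ h, fun Θ Ψ h => llm_sound_aux _ h⟩
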